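/- arXiv:1601.01832 — 3 statements merged into one kernel-verified Lean document; each statement's English description precedes it below -/
import Mathlib

section
/- Let I be a non-zero ideal of an evolution algebra A with natural basis B = {e_i : i ∈ Λ}. If I has the absorption property, then there exists a subset B₁ ⊆ B that is a natural basis of I; in particular I is an evolution ideal with the extension property. -/
/-!
Multiplying `x ∈ I` by `e i` isolates the coefficient: `x * e i = xᵢ • e i²`, so `xᵢ ≠ 0` puts
`e i²` in `I`. Then `a * e i = aᵢ • e i² ∈ I` for every `a`, and absorption gives `e i ∈ I`.
Hence `I` is spanned by the basis vectors it contains, which are linearly independent.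
-/

namespace Module.Basis

variable {K A ι : Type*} [Field K]

section Natural

variable [NonUnitalNonAssocCommRing A] [Module K A] [IsScalarTower K A A]
  (e : Basis ι K A)

theorem mul_eq_repr_smul_mul_self (hnat : ∀ i j, i ≠ j → e i * e j = 0) (y : A) (i : ι) :
    y * e i = e.repr y i • (e i * e i) := by
  conv_lhs => rw [← e.linearCombination_repr y]
  rw [Finsupp.linearCombination_apply, Finsupp.sum_mul, Finsupp.sum_eq_single i]
  · rw [smul_mul_assoc]
  · intro j _ hj
    rw [smul_mul_assoc, hnat j i hj, smul_zero]
  · intro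
    rw [zero_smul, zero_mul]

theorem mem_of_repr_ne_zero_of_absorbing (hnat : ∀ i j, i ≠ j → e i * e j = 0)
    {I : Submodule K A} (hI : ∀ x ∈ I, ∀ a : A, x * a ∈ I)
    (habs : ∀ x : A, (∀ a : A, x * a ∈ I) → x ∈ I) {x : A} (hx : x ∈ I) {i : ι}
    (hxi : e.repr x i ≠ 0) : e i ∈ I := by
  have hsq : e i * e i ∈ I := by
    have h := I.smul_mem (e.repr x i)⁻¹ (hI x hx (e i))
    rwa [e.mul_eq_repr_smul_mul_self hnat, smul_smul, inv_mul_cancel₀ hxi, one_smul] at h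
  refine habs _ fun a => ?_
  rw [mul_comm, e.mul_eq_repr_smul_mul_self hnat]
  exact I.smul_mem _ hsq

end Natural

variable [AddCommGroup A] [Module K A] (e : Basis ι K A)

theorem span_image_setOf_mem_eq {I : Submodule K A}
    (h : ∀ x ∈ I, ∀ i, e.repr x i ≠ 0 → e i ∈ I) : Submodule.span K (e '' {i | e i ∈ I}) = I := by
  refine le_antisymm (Submodule.span_le.mpr ?_) fun x hx => ?_
  · rintro _ ⟨i, hi, rfl⟩
    exact hi
  · rw [← e.linearCombination_repr x, Finsupp.linearCombination_apply]
    refine Submodule.sum_mem _ fun i hi => Submodule.smul_mem _ _ (Submodule.subset_span ?_)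
    exact ⟨i, h x hx i (Finsupp.mem_support_iff.mp hi), rfl⟩

theorem exists_basis_of_span_image_eq {I : Submodule K A} {s : Set ι}
    (hs : Submodule.span K (e '' s) = I) : ∃ b : Basis s K I, ∀ i : s, (b i : A) = e i := by
  have hli : LinearIndependent K (fun i : s => e i) :=
    e.linearIndependent.comp Subtype.val Subtype.val_injective
  have hrange : Submodule.span K (Set.range fun i : s => e i) = I := by
    rwa [← Set.image_eq_range]
  exact ⟨(Basis.span hli).map (LinearEquiv.ofEq _ _ hrange), fun i => by simp [Basis.span_apply]⟩

end Module.Basis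

theorem absorption_subset_basis_general {K A : Type*} [Field K]
    [NonUnitalNonAssocCommRing A] [Module K A] [IsScalarTower K A A]
    {ι : Type*} (e : Module.Basis ι K A) (hnat : ∀ i j, i ≠ j → e i * e j = 0)
    (I : Submodule K A) (hI : ∀ x ∈ I, ∀ a : A, x * a ∈ I)
    (habs : ∀ x : A, (∀ a : A, x * a ∈ I) → x ∈ I) :
    ∃ s : Set ι, Submodule.span K (e '' s) = I ∧
      ∃ b₁ : Module.Basis s K I, ∀ i : s, (b₁ i : A) = e i := by
  have hspan : Submodule.span K (e '' {i | e i ∈ I}) = I :=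
    e.span_image_setOf_mem_eq fun _ hx _ hxi =>
      e.mem_of_repr_ne_zero_of_absorbing hnat hI habs hx hxi
  exact ⟨_, hspan, e.exists_basis_of_span_image_eq hspan⟩

/-- If a non-zero ideal `I` of an evolution algebra has the absorption property, then
a subset of the natural basis `B` is a natural basis of `I`; in particular `I` is an
evolution ideal with the extension property. -/
theorem absorption_subset_basis {K A : Type*} [Field K]
    [NonUnitalNonAssocCommRing A] [Module K A] [SMulCommClass K A A] [IsScalarTower K A A]
    {ι : Type*} (e : Module.Basis ι K A) (hnat : ∀ i j, i ≠ j → e i * e j = 0)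
    (I : Submodule K A) (hI : ∀ x ∈ I, ∀ a : A, x * a ∈ I) (hIne : I ≠ ⊥)
    (habs : ∀ x : A, (∀ a : A, x * a ∈ I) → x ∈ I) :
    ∃ s : Set ι, Submodule.span K (e '' s) = I ∧
      ∃ b₁ : Module.Basis s K I, ∀ i : s, (b₁ i : A) = e i :=
  absorption_subset_basis_general e hnat I hI habs
end

section
/- For any element x of an evolution algebra A, the ideal of A generated by x has vector-space dimension at most countable. Consequently every simple evolution algebra has dimension at most countable. -/
/-!
Every element lies in the span of the finitely many basis vectors in its support, and in an
evolution algebra `e i * a` only involves the support of `e i * e i`. So the span of any set of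
basis vectors that is closed under passing from `e i` to the support of `e i * e i` is an ideal.
Starting from the support of `x` and closing up in countably many steps, each adding finitely
many indices per index, gives such a set that is countable; it bounds the ideal generated by `x`.
A simple algebra is generated, as an ideal, by any `a` with `a * b ≠ 0`.
-/

/-- The ideal of `A` generated by the element `x`. -/
def idealGen (K : Type*) {A : Type*} [Field K] [NonUnitalNonAssocCommRing A] [Module K A]
    [SMulCommClass K A A] [IsScalarTower K A A] (x : A) : Submodule K A :=
  sInf {N : Submodule K A | x ∈ N ∧ ∀ y ∈ N, ∀ a : A, y * a ∈ N}

theorem Set.Countable.exists_superset_forall_subset {ι : Type*} {s : Set ι} (hs : s.Countable)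
    (f : ι → Set ι) (hf : ∀ i, (f i).Countable) :
    ∃ S : Set ι, s ⊆ S ∧ S.Countable ∧ ∀ i ∈ S, f i ⊆ S := by
  set step : Set ι → Set ι := fun t => t ∪ ⋃ i ∈ t, f i
  have step_countable : ∀ n, (step^[n] s).Countable := by
    intro n
    induction n with
    | zero => exact hs
    | succ n ih =>
      rw [Function.iterate_succ_apply']
      exact ih.union (ih.biUnion fun i _ => hf i)
  refine ⟨⋃ n, step^[n] s, Set.subset_iUnion (fun n => step^[n] s) 0,
    Set.countable_iUnion step_countable, ?_⟩
  intro i hi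
  obtain ⟨n, hn⟩ := Set.mem_iUnion.mp hi
  refine subset_trans ?_ (Set.subset_iUnion _ (n + 1))
  rw [Function.iterate_succ_apply']
  exact subset_trans (Set.subset_biUnion_of_mem hn) Set.subset_union_right

section idealGen

variable {K A : Type*} [Field K] [NonUnitalNonAssocCommRing A] [Module K A]
  [SMulCommClass K A A] [IsScalarTower K A A]

theorem mem_idealGen_self (x : A) : x ∈ idealGen K x :=
  Submodule.mem_sInf.mpr fun _ hN => hN.1

theorem mul_mem_idealGen {x y : A} (hy : y ∈ idealGen K x) (a : A) : y * a ∈ idealGen K x :=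
  Submodule.mem_sInf.mpr fun N hN => hN.2 y (Submodule.mem_sInf.mp hy N hN) a

theorem idealGen_le {x : A} {N : Submodule K A} (hx : x ∈ N) (hN : ∀ y ∈ N, ∀ a : A, y * a ∈ N) :
    idealGen K x ≤ N :=
  sInf_le ⟨hx, hN⟩

theorem idealGen_eq_top_of_mul_ne_zero
    (hsimple : ∀ N : Submodule K A, (∀ x ∈ N, ∀ a : A, x * a ∈ N) → N = ⊥ ∨ N = ⊤)
    {a b : A} (hab : a * b ≠ 0) : idealGen K a = ⊤ := by
  refine (hsimple _ fun y hy c => mul_mem_idealGen hy c).resolve_left fun hbot => hab ?_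
  have hmem := mul_mem_idealGen (mem_idealGen_self (K := K) a) b
  rwa [hbot, Submodule.mem_bot] at hmem

end idealGen

section Evolution

variable {K A : Type*} [Field K] [NonUnitalNonAssocCommRing A] [Module K A]
  [SMulCommClass K A A] [IsScalarTower K A A] {ι : Type*} {e : Module.Basis ι K A}

theorem Module.Basis.mul_mem_span_image_of_mul_self_mem (hnat : ∀ i j, i ≠ j → e i * e j = 0)
    {S : Set ι} (hS : ∀ i ∈ S, e i * e i ∈ Submodule.span K (e '' S))
    {y : A} (hy : y ∈ Submodule.span K (e '' S)) (a : A) :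
    y * a ∈ Submodule.span K (e '' S) := by
  set N := Submodule.span K (e '' S)
  have basis_mul_mem : ∀ i ∈ S, e i * a ∈ N := by
    intro i hi
    suffices ⊤ ≤ N.comap (LinearMap.mulLeft K (e i)) from this Submodule.mem_top
    rw [← e.span_eq, Submodule.span_le]
    rintro _ ⟨j, rfl⟩
    by_cases hij : i = j
    · subst hij
      exact hS i hi
    · simp only [SetLike.mem_coe, Submodule.mem_comap, LinearMap.mulLeft_apply, hnat i j hij]
      exact N.zero_mem
  suffices N ≤ N.comap (LinearMap.mulRight K a) from this hy
  rw [Submodule.span_le]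
  rintro _ ⟨i, hi, rfl⟩
  exact basis_mul_mem i hi

theorem Module.Basis.rank_idealGen_le_aleph0 (hnat : ∀ i j, i ≠ j → e i * e j = 0) (x : A) :
    Module.rank K (idealGen K x) ≤ Cardinal.aleph0 := by
  obtain ⟨S, hxS, hS, hclosed⟩ := (e.repr x).support.countable_toSet.exists_superset_forall_subset
    (fun i => ((e.repr (e i * e i)).support : Set ι)) fun i => Finset.countable_toSet _
  have mem_span_of_support_subset : ∀ y : A, ↑(e.repr y).support ⊆ S →
      y ∈ Submodule.span K (e '' S) :=
    fun y hy => Submodule.span_mono (Set.image_mono hy) (e.mem_span_repr_support y)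
  have hle : idealGen K x ≤ Submodule.span K (e '' S) :=
    idealGen_le (mem_span_of_support_subset x hxS)
      fun y hy a => e.mul_mem_span_image_of_mul_self_mem hnat
        (fun i hi => mem_span_of_support_subset _ (hclosed i hi)) hy a
  calc Module.rank K (idealGen K x) ≤ Module.rank K (Submodule.span K (e '' S)) :=
        Submodule.rank_mono hle
    _ ≤ Cardinal.mk (e '' S) := rank_span_le _
    _ ≤ Cardinal.aleph0 := (hS.image e).le_aleph0

end Evolution

/-- In an evolution algebra the ideal generated by any element has dimension at most
countable; consequently every simple evolution algebra has dimension at most countable. -/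
theorem ideal_generated_rank_le_aleph0 {K A : Type*} [Field K]
    [NonUnitalNonAssocCommRing A] [Module K A] [SMulCommClass K A A] [IsScalarTower K A A]
    {ι : Type*} (e : Module.Basis ι K A) (hnat : ∀ i j, i ≠ j → e i * e j = 0) :
    (∀ x : A, Module.rank K (idealGen K x) ≤ Cardinal.aleph0) ∧
    ((∃ a b : A, a * b ≠ 0) ∧
        (∀ N : Submodule K A, (∀ x ∈ N, ∀ a : A, x * a ∈ N) → N = ⊥ ∨ N = ⊤) →
      Module.rank K A ≤ Cardinal.aleph0) := by
  refine ⟨e.rank_idealGen_le_aleph0 hnat, ?_⟩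
  rintro ⟨⟨a, b, hab⟩, hsimple⟩
  have hrank := e.rank_idealGen_le_aleph0 hnat a
  rwa [idealGen_eq_top_of_mul_ne_zero hsimple hab, rank_top] at hrank
end

section
/- Every non-degenerate evolution algebra A admits an optimal direct-sum decomposition A = ⊕_{γ ∈ Γ} I_γ into non-zero ideals each of which is an irreducible evolution algebra, and this decomposition is unique up to reordering. -/
/-- `N` (an ideal of `A`, regarded as an algebra with the inherited product) is
irreducible: it is not the direct sum of two non-zero ideals of itself. -/
def IsIrreducibleSummand {K A : Type*} [Field K] [NonUnitalNonAssocCommRing A]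
    [Module K A] [SMulCommClass K A A] [IsScalarTower K A A] (N : Submodule K A) : Prop :=
  ¬ ∃ J₁ J₂ : Submodule K A, J₁ ≤ N ∧ J₂ ≤ N ∧ J₁ ≠ ⊥ ∧ J₂ ≠ ⊥ ∧
      (∀ x ∈ J₁, ∀ a ∈ N, x * a ∈ J₁) ∧ (∀ x ∈ J₂, ∀ a ∈ N, x * a ∈ J₂) ∧
      J₁ ⊓ J₂ = ⊥ ∧ J₁ ⊔ J₂ = N

/-!
Attach to the natural basis the graph `e.evolutionGraph` joining `i ≠ j` whenever `e j` occurs in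
`e i * e i` or `e i` occurs in `e j * e j`. Non-degeneracy means `e k * e k ≠ 0` for all `k`, and
this makes supports rigid: if `J₁, J₂` are ideals with `J₁ ⊓ J₂ = ⊥`, then no coordinate `k` is
non-zero both on an element `x ∈ J₁` and on an element `y ∈ J₂`, because `x * e k` and `y * e k`
are non-zero multiples of `e k * e k`. Hence every basis vector of `J₁ ⊔ J₂` lies in `J₁` or in
`J₂`, each `Jᵢ` is spanned by the basis vectors it contains, and no edge of the graph joins the
two sets of indices. So a direct summand ideal is the span of a union of connected components, an
irreducible one is the span of a single component, and the spans of the components form the unique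
optimal decomposition.
-/

open Function Set Submodule

theorem sSupIndep.eq_of_subset_of_sSup_le {α : Type*} [CompleteLattice α] {s t : Set α}
    (hs : sSupIndep s) (hbot : ⊥ ∉ s) (hts : t ⊆ s) (hle : sSup s ≤ sSup t) : t = s := by
  refine hts.antisymm fun a ha => by_contra fun hat => hbot ?_
  have hle' : a ≤ sSup (s \ {a}) :=
    (le_sSup ha).trans <| hle.trans <|
      sSup_le_sSup fun b hb => ⟨hts hb, fun hba => hat (hba ▸ hb)⟩
  exact (hs ha).eq_bot_of_le hle' ▸ ha

theorem LinearIndependent.iSupIndep_span_image {R M ι κ : Type*} [Ring R] [AddCommGroup M]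
    [Module R M] {v : ι → M} (hv : LinearIndependent R v) {s : κ → Set ι}
    (hs : Pairwise (Disjoint on s)) : iSupIndep fun k => span R (v '' s k) := by
  refine iSupIndep_def.2 fun k => (hv.disjoint_span_image disjoint_compl_right).mono_right ?_
  exact iSup₂_le fun j hj => span_mono (image_mono (hs hj).subset_compl_right)

namespace SimpleGraph

variable {V : Type*} {G : SimpleGraph V}

variable (G) in
def IsAdjClosed (T : Set V) : Prop := ∀ ⦃u v⦄, G.Adj u v → u ∈ T → v ∈ T

theorem IsAdjClosed.diff {S T : Set V} (hS : G.IsAdjClosed S) (hT : G.IsAdjClosed T) :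
    G.IsAdjClosed (S \ T) :=
  fun _ _ huv hu => ⟨hS huv hu.1, fun hv => hu.2 (hT huv.symm hv)⟩

theorem ConnectedComponent.isAdjClosed_supp (c : G.ConnectedComponent) : G.IsAdjClosed c.supp :=
  fun _ _ huv hu => c.mem_supp_of_adj_mem_supp hu huv

theorem IsAdjClosed.supp_subset {T : Set V} (hT : G.IsAdjClosed T) {v : V} (hv : v ∈ T) :
    (G.connectedComponentMk v).supp ⊆ T := by
  intro u hu
  have hvu := (reachable_iff_reflTransGen v u).1 (ConnectedComponent.exact hu).symm
  clear hu
  induction hvu with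
  | refl => exact hv
  | tail _ hadj ih => exact hT hadj ih

end SimpleGraph

theorem Module.Basis.span_image_ne_bot {R M ι : Type*} [Semiring R] [Nontrivial R]
    [AddCommMonoid M] [Module R M] (e : Module.Basis ι R M) {s : Set ι} {i : ι} (hi : i ∈ s) :
    span R (e '' s) ≠ ⊥ :=
  fun h => e.ne_zero i (span_eq_bot.1 h _ (mem_image_of_mem e hi))

theorem Module.Basis.eq_zero_or_eq_zero_of_eq_add {R M ι : Type*} [Semiring R]
    [AddCommMonoid M] [Module R M] (e : Module.Basis ι R M) {i : ι} {x y : M} (h : e i = x + y)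
    (hxy : ∀ k, e.repr x k = 0 ∨ e.repr y k = 0) : x = 0 ∨ y = 0 := by
  have hsum (k : ι) : e.repr x k + e.repr y k = Finsupp.single i 1 k := by
    rw [← Finsupp.add_apply, ← map_add, ← h, e.repr_self]
  have hoff (k : ι) (hk : k ≠ i) : e.repr x k = 0 ∧ e.repr y k = 0 := by
    have := hsum k
    rw [Finsupp.single_eq_of_ne hk] at this
    rcases hxy k with h0 | h0 <;> simp_all
  rcases hxy i with hi | hi
  · refine .inl (e.ext_elem_iff.2 fun k => ?_)
    rcases eq_or_ne k i with rfl | hk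
    · simpa using hi
    · simpa using (hoff k hk).1
  · refine .inr (e.ext_elem_iff.2 fun k => ?_)
    rcases eq_or_ne k i with rfl | hk
    · simpa using hi
    · simpa using (hoff k hk).2

def Submodule.IsIdeal {K A : Type*} [Semiring K] [Mul A] [AddCommMonoid A] [Module K A]
    (J : Submodule K A) : Prop :=
  ∀ x ∈ J, ∀ a : A, x * a ∈ J

theorem Submodule.isIdeal_sSup {K A : Type*} [Semiring K] [NonUnitalNonAssocSemiring A]
    [Module K A] [IsScalarTower K A A] {s : Set (Submodule K A)} (hs : ∀ J ∈ s, J.IsIdeal) :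
    (sSup s).IsIdeal := by
  intro x hx a
  have hle : sSup s ≤ (sSup s).comap (LinearMap.mulRight K a) :=
    sSup_le fun J hJ y hy => le_sSup hJ (hs J hJ y hy a)
  exact hle hx

namespace Module.Basis

variable {K A ι : Type*} [Field K] [NonUnitalNonAssocCommRing A] [Module K A]
  (e : Module.Basis ι K A)

def IsNatural : Prop := ∀ i j, i ≠ j → e i * e j = 0

def evolutionGraph : SimpleGraph ι := SimpleGraph.fromRel fun i j => e.repr (e i * e i) j ≠ 0

variable {e} [IsScalarTower K A A]

theorem IsNatural.mul_basis (he : e.IsNatural) (a : A) (j : ι) :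
    a * e j = e.repr a j • (e j * e j) := by
  have h : LinearMap.mulRight K (e j) = (e.coord j).smulRight (e j * e j) := e.ext fun i => by
    rcases eq_or_ne i j with rfl | hij
    · simp
    · simp [he i j hij, Finsupp.single_eq_of_ne hij.symm]
  exact LinearMap.congr_fun h a

theorem IsNatural.mul_self_ne_zero (he : e.IsNatural)
    (hnd : ∀ x : A, (∀ a : A, x * a = 0) → x = 0) (i : ι) : e i * e i ≠ 0 :=
  fun h => e.ne_zero i (hnd _ fun a => by rw [mul_comm, he.mul_basis, h, smul_zero])

variable (e) in
theorem isIdeal_iff_mul_basis_mem {J : Submodule K A} :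
    J.IsIdeal ↔ ∀ x ∈ J, ∀ k, x * e k ∈ J := by
  refine ⟨fun hJ x hx k => hJ x hx (e k), fun h x hx a => ?_⟩
  have hle : ⊤ ≤ J.comap (LinearMap.mulRight K x) := by
    rw [← e.span_eq, span_le]
    rintro _ ⟨k, rfl⟩
    simpa [mul_comm] using h x hx k
  simpa [mul_comm] using hle (mem_top (x := a))

theorem IsNatural.isIdeal_of_le_span_image (he : e.IsNatural) {S : Set ι} {J : Submodule K A}
    (hJ : J ≤ span K (e '' S)) (hrel : ∀ x ∈ J, ∀ a ∈ span K (e '' S), x * a ∈ J) :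
    J.IsIdeal := by
  refine (isIdeal_iff_mul_basis_mem e).2 fun x hx k => ?_
  by_cases hk : k ∈ S
  · exact hrel x hx _ (subset_span (mem_image_of_mem e hk))
  · have hxk : e.repr x k = 0 :=
      by_contra fun h => hk (e.mem_span_image.1 (hJ hx) (by simpa using h))
    rw [he.mul_basis, hxk, zero_smul]
    exact J.zero_mem

theorem IsNatural.isIdeal_span_image (he : e.IsNatural) {T : Set ι}
    (hT : e.evolutionGraph.IsAdjClosed T) : (span K (e '' T)).IsIdeal := by
  refine (isIdeal_iff_mul_basis_mem e).2 fun x hx k => ?_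
  rw [he.mul_basis]
  rcases eq_or_ne (e.repr x k) 0 with h | h
  · rw [h, zero_smul]
    exact zero_mem _
  have hk : k ∈ T := e.mem_span_image.1 hx (by simpa using h)
  refine smul_mem _ _ (e.mem_span_image.2 fun j hj => ?_)
  rcases eq_or_ne k j with rfl | hkj
  · exact hk
  · exact hT ((SimpleGraph.fromRel_adj _ _ _).2 ⟨hkj, .inl (by simpa using hj)⟩) hk

theorem IsNatural.mul_self_mem_of_repr_ne_zero (he : e.IsNatural) {J : Submodule K A}
    (hJ : J.IsIdeal) {x : A} (hx : x ∈ J) {k : ι} (hk : e.repr x k ≠ 0) : e k * e k ∈ J :=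
  (smul_mem_iff J hk).1 (he.mul_basis x k ▸ hJ x hx (e k))

theorem IsNatural.repr_eq_zero_or_repr_eq_zero (he : e.IsNatural)
    (hsq : ∀ i, e i * e i ≠ 0) {J₁ J₂ : Submodule K A} (hJ₁ : J₁.IsIdeal) (hJ₂ : J₂.IsIdeal)
    (hdisj : Disjoint J₁ J₂) {x y : A} (hx : x ∈ J₁) (hy : y ∈ J₂) (k : ι) :
    e.repr x k = 0 ∨ e.repr y k = 0 := by
  by_contra! h
  exact hsq k (disjoint_def.1 hdisj _ (he.mul_self_mem_of_repr_ne_zero hJ₁ hx h.1)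
    (he.mul_self_mem_of_repr_ne_zero hJ₂ hy h.2))

theorem IsNatural.basis_mem_or_basis_mem_of_mem_sup (he : e.IsNatural)
    (hsq : ∀ i, e i * e i ≠ 0) {J₁ J₂ : Submodule K A} (hJ₁ : J₁.IsIdeal) (hJ₂ : J₂.IsIdeal)
    (hdisj : Disjoint J₁ J₂) {i : ι} (h : e i ∈ J₁ ⊔ J₂) :
    e i ∈ J₁ ∨ e i ∈ J₂ := by
  obtain ⟨x, hx, y, hy, hxy⟩ := mem_sup.1 h
  rcases e.eq_zero_or_eq_zero_of_eq_add hxy.symm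
    (he.repr_eq_zero_or_repr_eq_zero hsq hJ₁ hJ₂ hdisj hx hy) with rfl | rfl
  · exact .inr (by simpa [← hxy] using hy)
  · exact .inl (by simpa [← hxy] using hx)

theorem IsNatural.not_adj_of_basis_mem (he : e.IsNatural)
    (hsq : ∀ i, e i * e i ≠ 0) {J₁ J₂ : Submodule K A} (hJ₁ : J₁.IsIdeal) (hJ₂ : J₂.IsIdeal)
    (hdisj : Disjoint J₁ J₂) {i j : ι} (hi : e i ∈ J₁) (hj : e j ∈ J₂) :
    ¬ e.evolutionGraph.Adj i j := by
  rintro ⟨-, hij | hji⟩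
  · exact (he.repr_eq_zero_or_repr_eq_zero hsq hJ₁ hJ₂ hdisj (hJ₁ _ hi (e i)) hj j).elim hij
      (by simp)
  · exact (he.repr_eq_zero_or_repr_eq_zero hsq hJ₁ hJ₂ hdisj hi (hJ₂ _ hj (e j)) i).elim
      (by simp) hji

theorem IsNatural.eq_span_setOf_basis_mem (he : e.IsNatural)
    (hsq : ∀ i, e i * e i ≠ 0) {J₁ J₂ : Submodule K A} (hJ₁ : J₁.IsIdeal) (hJ₂ : J₂.IsIdeal)
    (hdisj : Disjoint J₁ J₂) {S : Set ι}
    (hsup : J₁ ⊔ J₂ = span K (e '' S)) : J₁ = span K (e '' {i | e i ∈ J₁}) := by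
  refine le_antisymm (fun x hx => e.mem_span_image.2 fun k hk => ?_) ?_
  · have hkS : k ∈ S := e.mem_span_image.1 (hsup ▸ mem_sup_left hx) hk
    refine (he.basis_mem_or_basis_mem_of_mem_sup hsq hJ₁ hJ₂ hdisj
      (hsup ▸ subset_span (mem_image_of_mem e hkS))).resolve_right fun hk₂ => ?_
    exact (he.repr_eq_zero_or_repr_eq_zero hsq hJ₁ hJ₂ hdisj hx hk₂ k).elim
      (Finsupp.mem_support_iff.1 hk) (by simp)
  · rw [span_le]
    rintro _ ⟨i, hi, rfl⟩
    exact hi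

theorem IsNatural.isAdjClosed_setOf_basis_mem (he : e.IsNatural)
    (hsq : ∀ i, e i * e i ≠ 0) {J₁ J₂ : Submodule K A} (hJ₁ : J₁.IsIdeal) (hJ₂ : J₂.IsIdeal)
    (hdisj : Disjoint J₁ J₂) {S : Set ι}
    (hsup : J₁ ⊔ J₂ = span K (e '' S)) (hS : e.evolutionGraph.IsAdjClosed S) :
    e.evolutionGraph.IsAdjClosed {i | e i ∈ J₁} := fun i j hij hi => by
  have hiS : i ∈ S := e.self_mem_span_image.1 (hsup ▸ mem_sup_left hi)
  exact (he.basis_mem_or_basis_mem_of_mem_sup hsq hJ₁ hJ₂ hdisj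
    (hsup ▸ subset_span (mem_image_of_mem e (hS hij hiS)))).resolve_right
    fun hj => he.not_adj_of_basis_mem hsq hJ₁ hJ₂ hdisj hi hj hij

theorem IsNatural.supp_subset_setOf_basis_mem (he : e.IsNatural) (hsq : ∀ i, e i * e i ≠ 0)
    {J₁ J₂ : Submodule K A} (hJ₁ : J₁.IsIdeal) (hJ₂ : J₂.IsIdeal) (hdisj : Disjoint J₁ J₂)
    {c : e.evolutionGraph.ConnectedComponent} (hsup : J₁ ⊔ J₂ = span K (e '' c.supp))
    (hne : J₁ ≠ ⊥) : c.supp ⊆ {i | e i ∈ J₁} := by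
  have hT := he.isAdjClosed_setOf_basis_mem hsq hJ₁ hJ₂ hdisj hsup c.isAdjClosed_supp
  obtain ⟨i, hi⟩ : {i | e i ∈ J₁}.Nonempty := Set.nonempty_iff_ne_empty.2 fun h =>
    hne ((he.eq_span_setOf_basis_mem hsq hJ₁ hJ₂ hdisj hsup).trans (by simp [h]))
  have hic : e.evolutionGraph.connectedComponentMk i = c :=
    e.self_mem_span_image.1 (hsup ▸ mem_sup_left hi)
  exact hic ▸ hT.supp_subset hi

variable [SMulCommClass K A A]

theorem IsNatural.supp_eq_of_isIrreducibleSummand (he : e.IsNatural) {T : Set ι}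
    (hT : e.evolutionGraph.IsAdjClosed T) (hirr : IsIrreducibleSummand (span K (e '' T)))
    {i : ι} (hi : i ∈ T) : (e.evolutionGraph.connectedComponentMk i).supp = T := by
  set c := e.evolutionGraph.connectedComponentMk i
  have hcT : c.supp ⊆ T := hT.supp_subset hi
  refine hcT.antisymm fun j hjT => by_contra fun hjc => hirr ?_
  refine ⟨span K (e '' c.supp), span K (e '' (T \ c.supp)), span_mono (image_mono hcT),
    span_mono (image_mono sdiff_subset),
    e.span_image_ne_bot SimpleGraph.ConnectedComponent.connectedComponentMk_mem,
    e.span_image_ne_bot ⟨hjT, hjc⟩,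
    fun x hx a _ => he.isIdeal_span_image c.isAdjClosed_supp x hx a,
    fun x hx a _ => he.isIdeal_span_image (hT.diff c.isAdjClosed_supp) x hx a,
    disjoint_iff.1 (e.linearIndependent.disjoint_span_image disjoint_sdiff_right), ?_⟩
  rw [← span_union, ← image_union, union_sdiff_cancel hcT]

theorem IsNatural.isIrreducibleSummand_span_supp (he : e.IsNatural) (hsq : ∀ i, e i * e i ≠ 0)
    (c : e.evolutionGraph.ConnectedComponent) : IsIrreducibleSummand (span K (e '' c.supp)) := by
  rintro ⟨J₁, J₂, h₁, h₂, hne₁, hne₂, hrel₁, hrel₂, hinf, hsup⟩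
  have hJ₁ := he.isIdeal_of_le_span_image h₁ hrel₁
  have hJ₂ := he.isIdeal_of_le_span_image h₂ hrel₂
  have hdisj : Disjoint J₁ J₂ := disjoint_iff.2 hinf
  obtain ⟨i, hi⟩ := c.nonempty_supp
  exact e.ne_zero i (disjoint_def.1 hdisj _
    (he.supp_subset_setOf_basis_mem hsq hJ₁ hJ₂ hdisj hsup hne₁ hi)
    (he.supp_subset_setOf_basis_mem hsq hJ₂ hJ₁ hdisj.symm (sup_comm J₁ J₂ ▸ hsup) hne₂ hi))

theorem IsNatural.exists_span_supp_eq (he : e.IsNatural) (hsq : ∀ i, e i * e i ≠ 0)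
    {N J : Submodule K A} (hN : N.IsIdeal) (hJ : J.IsIdeal) (hdisj : Disjoint N J)
    (hsup : N ⊔ J = ⊤) (hne : N ≠ ⊥) (hirr : IsIrreducibleSummand N) :
    ∃ c : e.evolutionGraph.ConnectedComponent, span K (e '' c.supp) = N := by
  have hsup' : N ⊔ J = span K (e '' univ) := by rw [image_univ, e.span_eq, hsup]
  have hNT := he.eq_span_setOf_basis_mem hsq hN hJ hdisj hsup'
  have hT := he.isAdjClosed_setOf_basis_mem hsq hN hJ hdisj hsup' fun _ _ _ _ => trivial
  obtain ⟨i, hi⟩ : {i | e i ∈ N}.Nonempty :=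
    Set.nonempty_iff_ne_empty.2 fun h => hne (hNT.trans (by simp [h]))
  exact ⟨_, by rw [he.supp_eq_of_isIrreducibleSummand hT (hNT ▸ hirr) hi, ← hNT]⟩

end Module.Basis

/-- Every non-degenerate evolution algebra admits an optimal direct-sum decomposition
into non-zero irreducible ideals, unique up to reordering (here: as a set of
submodules). -/
theorem optimal_decomposition_exists_unique {K A : Type*} [Field K]
    [NonUnitalNonAssocCommRing A] [Module K A] [SMulCommClass K A A] [IsScalarTower K A A]
    {ι : Type*} (e : Module.Basis ι K A) (hnat : ∀ i j, i ≠ j → e i * e j = 0)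
    (hnd : ∀ x : A, (∀ a : A, x * a = 0) → x = 0) :
    ∃ Γ : Set (Submodule K A),
      (∀ N ∈ Γ, N ≠ ⊥ ∧ (∀ x ∈ N, ∀ a : A, x * a ∈ N) ∧ IsIrreducibleSummand N) ∧
      sSupIndep Γ ∧ sSup Γ = ⊤ ∧
      ∀ Γ' : Set (Submodule K A),
        (∀ N ∈ Γ', N ≠ ⊥ ∧ (∀ x ∈ N, ∀ a : A, x * a ∈ N) ∧ IsIrreducibleSummand N) →
        sSupIndep Γ' → sSup Γ' = ⊤ → Γ' = Γ := by
  have he : e.IsNatural := hnat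
  have hsq := he.mul_self_ne_zero hnd
  set Γ := range fun c : e.evolutionGraph.ConnectedComponent => span K (e '' c.supp)
  have hΓ : ∀ N ∈ Γ, N ≠ ⊥ ∧ N.IsIdeal ∧ IsIrreducibleSummand N := by
    rintro _ ⟨c, rfl⟩
    obtain ⟨i, hi⟩ := c.nonempty_supp
    exact ⟨e.span_image_ne_bot hi, he.isIdeal_span_image c.isAdjClosed_supp,
      he.isIrreducibleSummand_span_supp hsq c⟩
  have hind : sSupIndep Γ := (e.linearIndependent.iSupIndep_span_image
    (SimpleGraph.pairwise_disjoint_supp_connectedComponent _)).sSupIndep_range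
  have htop : sSup Γ = ⊤ := by
    rw [sSup_range, ← span_iUnion, ← image_iUnion,
      SimpleGraph.iUnion_connectedComponentSupp, image_univ, e.span_eq]
  refine ⟨Γ, hΓ, hind, htop, fun Γ' hΓ' hind' htop' => ?_⟩
  refine hind.eq_of_subset_of_sSup_le (fun h => (hΓ ⊥ h).1 rfl) (fun N hN => ?_)
    (by rw [htop, htop'])
  obtain ⟨hne, hideal, hirr⟩ := hΓ' N hN
  have hsup : N ⊔ sSup (Γ' \ {N}) = ⊤ := by
    rw [← sSup_insert, insert_sdiff_singleton, insert_eq_of_mem hN, htop']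
  exact he.exists_span_supp_eq hsq hideal (isIdeal_sSup fun M hM => (hΓ' M hM.1).2.1)
    (hind' hN) hsup hne hirr
end
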